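/- arXiv:2211.02148 — 5 statements merged into one kernel-verified Lean document; each statement's English description precedes it below -/
import Mathlib

section
/- Let X^OTW be an OTW-subshift over an alphabet 𝒜, let F ⊆ 𝒜 be a finite set, let α ∈ L_X, and let n ∈ ℕ with n ≤ |α|. Then σⁿ(𝒵(α,F)) = 𝒵(α_{n+1,|α|}, F) ∩ ℱ(α_{1,n}), where α_{i,j} denotes the subword α_i⋯α_j of α (taken to be the empty word ω when i > j). -/
open Set

section Subshift

variable {A : Type*}

/-- The word `w` occurs as a block of `x` at position `i`. -/
def IsBlockAt (x : ℕ → A) (w : List A) (i : ℕ) : Prop :=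
  ∀ j, ∀ _ : j < w.length, x (i + j) = w[j]

/-- The subshift `X_F ⊆ 𝒜^ℕ` determined by the set `F` of forbidden words. -/
def SubshiftOf (F : Set (List A)) : Set (ℕ → A) :=
  {x | ∀ w ∈ F, ∀ i, ¬ IsBlockAt x w i}

/-- The language of the subshift: all finite words occurring in some element of `X_F`. -/
def Lang (F : Set (List A)) : Set (List A) :=
  {w | ∃ x ∈ SubshiftOf F, ∃ i, IsBlockAt x w i}

/-- Concatenation of a finite word with an infinite sequence. -/
def wcat (w : List A) (x : ℕ → A) : ℕ → A := fun n =>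
  if h : n < w.length then w[n] else x (n - w.length)

/-- `C(α,β) = {β x ∈ X : α x ∈ X}`. -/
def Cset (F : Set (List A)) (α β : List A) : Set (ℕ → A) :=
  {y | ∃ x : ℕ → A, y = wcat β x ∧ wcat β x ∈ SubshiftOf F ∧ wcat α x ∈ SubshiftOf F}

/-- The cylinder set `Z_β = C(ω,β)`. -/
def Zcyl (F : Set (List A)) (β : List A) : Set (ℕ → A) := Cset F [] β

/-- The follower set `F_α = C(α,ω)`. -/
def Fol (F : Set (List A)) (α : List A) : Set (ℕ → A) := Cset F α []

/-- The relative range `r(S,w) = {x ∈ X : w x ∈ S}`. -/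
def relRange (F : Set (List A)) (S : Set (ℕ → A)) (w : List A) : Set (ℕ → A) :=
  {x | x ∈ SubshiftOf F ∧ wcat w x ∈ S}

/-- Membership in the Boolean algebra `𝒰` of subsets of `X` generated by the sets
`C(α,β)`, `α, β ∈ L_X`: closed under finite unions, finite intersections and
complements in `X`. -/
inductive InU (F : Set (List A)) : Set (ℕ → A) → Prop
  | base {α β : List A} (hα : α ∈ Lang F) (hβ : β ∈ Lang F) : InU F (Cset F α β)
  | union {S T : Set (ℕ → A)} : InU F S → InU F T → InU F (S ∪ T)
  | inter {S T : Set (ℕ → A)} : InU F S → InU F T → InU F (S ∩ T)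
  | compl {S : Set (ℕ → A)} : InU F S → InU F (SubshiftOf F \ S)

/-- `αβ⁻¹` is in reduced form in the free group on the alphabet:
`α` and `β` do not end in the same letter. -/
def ReducedPair (α β : List A) : Prop :=
  ¬ ∃ c : A, α.getLast? = some c ∧ β.getLast? = some c

/-- Ultrafilters (= prime filters) of the Boolean algebra `𝒰`. -/
structure UltraU (F : Set (List A)) where
  sets : Set (Set (ℕ → A))
  mem_inU : ∀ S ∈ sets, InU F S
  nonempty : sets.Nonempty
  empty_not_mem : ∅ ∉ sets
  inter_mem : ∀ S ∈ sets, ∀ T ∈ sets, S ∩ T ∈ sets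
  superset_mem : ∀ S ∈ sets, ∀ T : Set (ℕ → A), InU F T → S ⊆ T → T ∈ sets
  prime : ∀ S T : Set (ℕ → A), InU F S → InU F T → S ∪ T ∈ sets → S ∈ sets ∨ T ∈ sets

/-- The basic (compact) open set `O_S = {ξ ∈ 𝒰̂ : S ∈ ξ}` of the Stone dual `𝒰̂`. -/
def Oset (F : Set (List A)) (S : Set (ℕ → A)) : Set (UltraU F) := {ξ | S ∈ ξ.sets}

/-- The Stone topology on `𝒰̂`. -/
instance (F : Set (List A)) : TopologicalSpace (UltraU F) :=
  TopologicalSpace.generateFrom {V | ∃ S : Set (ℕ → A), InU F S ∧ V = Oset F S}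

/-- The graph of the partially defined map `σ̂` on `𝒰̂`:
`sigmaHatRel F ξ η` holds iff `ξ ∈ dom σ̂` and `η = σ̂(ξ)`. -/
def sigmaHatRel (F : Set (List A)) (ξ η : UltraU F) : Prop :=
  ∃ a : A, Zcyl F [a] ∈ ξ.sets ∧
    η.sets = {B : Set (ℕ → A) | InU F B ∧ ∃ S ∈ ξ.sets, relRange F S [a] ⊆ B}

/- The OTW subshift, modelled inside `ℕ → Option A`; a finite word corresponds to a
sequence that is eventually `none` (`none` playing the role of the symbol `∞`). -/

/-- The shift map, deleting the first letter (it sends sequences of length `≤ 1`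
to the empty sequence). -/
def shiftO (y : ℕ → Option A) : ℕ → Option A := fun i => y (i + 1)

/-- An infinite sequence, as an element of the OTW model. -/
def ofSeq (x : ℕ → A) : ℕ → Option A := fun i => some (x i)

/-- A finite word, as an element of the OTW model. -/
def ofWord (w : List A) : ℕ → Option A := fun i =>
  if h : i < w.length then some w[i] else none

/-- Concatenation of a finite word with an element of the OTW model. -/
def wcatO (w : List A) (y : ℕ → Option A) : ℕ → Option A := fun n =>
  if h : n < w.length then some w[n] else y (n - w.length)

/-- The finite words belonging to `X^fin`: those `w` for which there are infinitely many
letters `a` such that `w a y ∈ X^inf` for some `y`. -/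
def XFin (F : Set (List A)) : Set (List A) :=
  {w | {a : A | ∃ y : ℕ → A, wcat (w ++ [a]) y ∈ SubshiftOf F}.Infinite}

/-- The OTW subshift `X^OTW = X^inf ∪ X^fin`. -/
def OTW (F : Set (List A)) : Set (ℕ → Option A) :=
  ofSeq '' SubshiftOf F ∪ ofWord '' XFin F

theorem ofSeq_mem_OTW {F : Set (List A)} {x : ℕ → A} (hx : x ∈ SubshiftOf F) :
    ofSeq x ∈ OTW F := Or.inl ⟨x, hx, rfl⟩

theorem ofWord_mem_OTW {F : Set (List A)} {w : List A} (hw : w ∈ XFin F) :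
    ofWord w ∈ OTW F := Or.inr ⟨w, hw, rfl⟩

/-- The generalised cylinder `𝒵(w,F') = {y ∈ X^OTW : y` begins with `w`, and the next
letter of `y` is not in `F'}`. -/
def genCyl (F : Set (List A)) (w : List A) (F' : Set A) : Set (ℕ → Option A) :=
  {y | y ∈ OTW F ∧ (∀ j, ∀ _ : j < w.length, y j = some w[j]) ∧
    ∀ a ∈ F', y w.length ≠ some a}

/-- The follower set `ℱ(w) = {y ∈ X^OTW : w y ∈ X^OTW}` in the OTW subshift. -/
def folO (F : Set (List A)) (w : List A) : Set (ℕ → Option A) :=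
  {y | y ∈ OTW F ∧ wcatO w y ∈ OTW F}

/-- The topology on `X^OTW`, generated by the generalised cylinders. -/
instance (F : Set (List A)) : TopologicalSpace ↥(OTW F) :=
  TopologicalSpace.generateFrom
    {V | ∃ w ∈ Lang F, ∃ F' : Set A, F'.Finite ∧
      V = {y : ↥(OTW F) | (y : ℕ → Option A) ∈ genCyl F w F'}}

/-- The graph of the map `π : 𝒰̂ → X^OTW`: `piRel F ξ y` holds iff `π(ξ) = y`.
(`y` begins with a nonempty word `w` iff `Z_w ∈ ξ`.) -/
def piRel (F : Set (List A)) (ξ : UltraU F) (y : ℕ → Option A) : Prop :=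
  (∀ i, y i = none → y (i + 1) = none) ∧
  ∀ w : List A, w ≠ [] →
    ((∀ j, ∀ _ : j < w.length, y j = some w[j]) ↔ Zcyl F w ∈ ξ.sets)

end Subshift

section Conjugacy

variable {A₁ A₂ : Type*}

/-- `h` commutes with the shift maps. -/
def ShiftCommuting (F₁ : Set (List A₁)) (F₂ : Set (List A₂))
    (h : ↥(OTW F₁) → ↥(OTW F₂)) : Prop :=
  ∀ (y : ↥(OTW F₁)) (hy : shiftO (y : ℕ → Option A₁) ∈ OTW F₁),
    (h ⟨shiftO (y : ℕ → Option A₁), hy⟩ : ℕ → Option A₂) =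
      shiftO ((h y : ℕ → Option A₂))

/-- `h` is length-preserving: `h y` and `y` have the same length, i.e. the same
positions where the symbol `∞` (here `none`) occurs. -/
def LengthPreserving (F₁ : Set (List A₁)) (F₂ : Set (List A₂))
    (h : ↥(OTW F₁) → ↥(OTW F₂)) : Prop :=
  ∀ (y : ↥(OTW F₁)) (i : ℕ),
    ((h y : ℕ → Option A₂) i = none ↔ (y : ℕ → Option A₁) i = none)

/-- A conjugacy of OTW subshifts: a homeomorphism commuting with the shifts and
preserving lengths. -/
def IsConjugacy (F₁ : Set (List A₁)) (F₂ : Set (List A₂))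
    (h : ↥(OTW F₁) ≃ₜ ↥(OTW F₂)) : Prop :=
  ShiftCommuting F₁ F₂ ⇑h ∧ LengthPreserving F₁ F₂ ⇑h

/-- The image `h̄(S) = h(S)` of a subset `S ⊆ X₁` under (the restriction to `X₁` of)
a map `h : X₁^OTW → X₂^OTW`. -/
def hbar (F₁ : Set (List A₁)) (F₂ : Set (List A₂))
    (h : ↥(OTW F₁) → ↥(OTW F₂)) (S : Set (ℕ → A₁)) : Set (ℕ → A₂) :=
  {z | ∃ y : ↥(OTW F₁), (y : ℕ → Option A₁) ∈ ofSeq '' S ∧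
    ofSeq z = (h y : ℕ → Option A₂)}

end Conjugacy

lemma shiftO_iter {A : Type*} (y : ℕ → Option A) (n i : ℕ) :
    shiftO^[n] y i = y (i + n) := by
  induction n generalizing y with
  | zero => rfl
  | succ n ih =>
    rw [Function.iterate_succ_apply, ih]
    show y (i + n + 1) = y (i + (n + 1))
    rfl

lemma subshift_shift {A : Type*} {F : Set (List A)} {x : ℕ → A}
    (hx : x ∈ SubshiftOf F) (n : ℕ) : (fun i => x (i + n)) ∈ SubshiftOf F := by
  intro w hw i hblock
  refine hx w hw (i + n) fun j hj => ?_
  have := hblock j hj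
  simp only at this
  rw [show i + n + j = i + j + n by omega]
  exact this

lemma wcat_shift {A : Type*} (v : List A) (y : ℕ → A) (m : ℕ) (hm : m ≤ v.length) :
    (fun i => wcat v y (i + m)) = wcat (v.drop m) y := by
  funext i
  simp only [wcat, List.length_drop]
  by_cases h : i + m < v.length
  · rw [dif_pos h, dif_pos (by omega)]
    rw [List.getElem_drop]
    congr 1; omega
  · rw [dif_neg h, dif_neg (by omega)]
    congr 1; omega

lemma XFin_drop {A : Type*} {F : Set (List A)} {w : List A} (hw : w ∈ XFin F) (n : ℕ) :
    w.drop n ∈ XFin F := by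
  refine hw.mono fun a ha => ?_
  obtain ⟨y, hy⟩ := ha
  set m := min n w.length with hm
  have hmle : m ≤ w.length := min_le_right _ _
  refine ⟨y, ?_⟩
  have hdrop : (w ++ [a]).drop m = w.drop n ++ [a] := by
    rw [List.drop_append_of_le_length hmle]
    congr 1
    rcases le_total n w.length with h | h
    · rw [hm, min_eq_left h]
    · rw [hm, min_eq_right h, List.drop_length, List.drop_eq_nil_of_le h]
  rw [← hdrop, ← wcat_shift (w ++ [a]) y m (by simp; omega)]
  exact subshift_shift hy m

lemma OTW_shift_iter {A : Type*} {F : Set (List A)} {y : ℕ → Option A}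
    (hy : y ∈ OTW F) (n : ℕ) : shiftO^[n] y ∈ OTW F := by
  rcases hy with ⟨x, hx, rfl⟩ | ⟨w, hw, rfl⟩
  · refine Or.inl ⟨fun i => x (i + n), subshift_shift hx n, ?_⟩
    funext i; simp [ofSeq, shiftO_iter]
  · refine Or.inr ⟨w.drop n, XFin_drop hw n, ?_⟩
    funext i
    rw [shiftO_iter]
    simp only [ofWord, List.length_drop]
    by_cases h : i + n < w.length
    · rw [dif_pos h, dif_pos (by omega)]
      simp only [List.getElem_drop, Nat.add_comm]
    · rw [dif_neg h, dif_neg (by omega)]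

theorem shift_image_genCyl {A : Type*} (F : Set (List A)) (α : List A)
    (hα : α ∈ Lang F) (Fs : Set A) (hFs : Fs.Finite) (n : ℕ) (hn : n ≤ α.length) :
    shiftO^[n] '' genCyl F α Fs = genCyl F (α.drop n) Fs ∩ folO F (α.take n) := by
  have htn : (α.take n).length = n := by simp [List.length_take]; omega
  ext z
  constructor
  · rintro ⟨y, ⟨hyO, hyagree, hynext⟩, rfl⟩
    have hshift : ∀ i, shiftO^[n] y i = y (i + n) := shiftO_iter y n
    have hcat : wcatO (α.take n) (shiftO^[n] y) = y := by
      funext i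
      simp only [wcatO, htn]
      by_cases h : i < n
      · rw [dif_pos h, List.getElem_take]
        exact (hyagree i (by omega)).symm
      · rw [dif_neg h, hshift]
        congr 1; omega
    refine ⟨⟨OTW_shift_iter hyO n, fun j hj => ?_, fun a ha => ?_⟩,
      OTW_shift_iter hyO n, ?_⟩
    · simp only [List.length_drop] at hj
      rw [hshift, List.getElem_drop]
      have h2 := hyagree (n + j) (by omega)
      convert h2 using 2
      omega
    · simp only [List.length_drop]
      rw [hshift, show α.length - n + n = α.length by omega]
      exact hynext a ha
    · rw [hcat]; exact hyO
  · rintro ⟨⟨hzO, hzagree, hznext⟩, _, hcatO⟩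
    refine ⟨wcatO (α.take n) z, ⟨hcatO, fun j hj => ?_, fun a ha => ?_⟩, ?_⟩
    · simp only [wcatO, htn]
      by_cases h : j < n
      · rw [dif_pos h, List.getElem_take]
      · rw [dif_neg h]
        have hj' : j - n < (α.drop n).length := by simp [List.length_drop]; omega
        have := hzagree (j - n) hj'
        rw [this]
        simp only [List.getElem_drop, show n + (j - n) = j by omega]
    · simp only [wcatO, htn]
      rw [dif_neg (by omega)]
      have := hznext a ha
      simp only [List.length_drop] at this
      exact this
    · funext i
      rw [shiftO_iter]
      simp only [wcatO, htn]
      rw [dif_neg (by omega)]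
      congr 1; omega
end

section
/- Let X^OTW be an OTW-subshift over an alphabet 𝒜, let F, G ⊆ 𝒜 be finite sets, let α, β ∈ L_X, and let n ∈ ℕ with n ≤ |α|. Then the set 𝒵(α,F) ∩ σ^{-n}(𝒵(β,G)) is either empty or is equal to 𝒵(γ,H) for some γ ∈ L_X and some finite H ⊆ 𝒜. -/
open Set

section Aux

variable {A : Type*}

lemma getElem_congr' (l : List A) {i j : ℕ} (h : i = j) (hi : i < l.length) :
    l[i]'hi = l[j]'(h ▸ hi) := by subst h; rfl

lemma shiftO_iterate_apply (y : ℕ → Option A) (n i : ℕ) :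
    shiftO^[n] y i = y (i + n) := by
  induction n generalizing y i with
  | zero => rfl
  | succ n ih =>
    rw [Function.iterate_succ_apply, ih]
    rfl

lemma shift_subshift {F : Set (List A)} {x : ℕ → A} (hx : x ∈ SubshiftOf F) :
    (fun i => x (i + 1)) ∈ SubshiftOf F := by
  intro w hw i hblk
  refine hx w hw (i + 1) (fun j hj => ?_)
  have := hblk j hj
  simpa [show i + j + 1 = i + 1 + j by omega] using this

lemma wcat_cons_succ (c : A) (s : List A) (y : ℕ → A) (i : ℕ) :
    wcat (c :: s) y (i + 1) = wcat s y i := by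
  simp only [wcat, List.length_cons]
  by_cases h : i < s.length
  · rw [dif_pos (by omega), dif_pos h]
    exact List.getElem_cons_succ ..
  · rw [dif_neg (by omega), dif_neg h]
    congr 1; omega

lemma shiftO_ofSeq (x : ℕ → A) : shiftO (ofSeq x) = ofSeq (fun i => x (i + 1)) := rfl

lemma shiftO_ofWord (w : List A) : shiftO (ofWord w) = ofWord w.tail := by
  funext i
  simp only [shiftO, ofWord, List.length_tail]
  by_cases h : i < w.length - 1
  · rw [dif_pos (by omega), dif_pos h]
    rw [List.getElem_tail]
  · rw [dif_neg (by omega), dif_neg h]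

lemma tail_mem_XFin {F : Set (List A)} {w : List A} (hw : w ∈ XFin F) :
    w.tail ∈ XFin F := by
  cases w with
  | nil => exact hw
  | cons c t =>
    refine hw.mono (fun a ha => ?_)
    obtain ⟨y, hy⟩ := ha
    refine ⟨y, ?_⟩
    have h2 : (fun i => wcat ((c :: t) ++ [a]) y (i + 1)) ∈ SubshiftOf F :=
      shift_subshift hy
    have h3 : (fun i => wcat ((c :: t) ++ [a]) y (i + 1)) = wcat (t ++ [a]) y := by
      funext i
      rw [List.cons_append]
      exact wcat_cons_succ ..
    rwa [h3] at h2

lemma shiftO_mem_OTW {F : Set (List A)} {y : ℕ → Option A} (hy : y ∈ OTW F) :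
    shiftO y ∈ OTW F := by
  rcases hy with ⟨x, hx, rfl⟩ | ⟨w, hw, rfl⟩
  · exact Or.inl ⟨_, shift_subshift hx, (shiftO_ofSeq x).symm ▸ rfl⟩
  · rw [shiftO_ofWord]
    exact Or.inr ⟨_, tail_mem_XFin hw, rfl⟩

lemma shiftO_iterate_mem_OTW {F : Set (List A)} {y : ℕ → Option A} (hy : y ∈ OTW F)
    (n : ℕ) : shiftO^[n] y ∈ OTW F := by
  induction n with
  | zero => exact hy
  | succ n ih => rw [Function.iterate_succ_apply']; exact shiftO_mem_OTW ih

lemma mem_lang_of_prefix {F : Set (List A)} {y : ℕ → Option A} (hy : y ∈ OTW F)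
    {w : List A} (hw : ∀ j, ∀ _ : j < w.length, y j = some w[j]) : w ∈ Lang F := by
  rcases hy with ⟨x, hx, rfl⟩ | ⟨u, hu, rfl⟩
  · refine ⟨x, hx, 0, fun j hj => ?_⟩
    have := hw j hj
    simpa [ofSeq] using this
  · obtain ⟨a, ha⟩ := hu.nonempty
    obtain ⟨y', hy'⟩ := ha
    refine ⟨wcat (u ++ [a]) y', hy', 0, fun j hj => ?_⟩
    have h1 := hw j hj
    have hju : j < u.length := by
      by_contra h
      simp [ofWord, dif_neg h] at h1
    have h2 : u[j] = w[j] := by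
      have : ofWord u j = some u[j] := by simp [ofWord, dif_pos hju]
      rw [this] at h1
      exact Option.some.inj h1
    show wcat (u ++ [a]) y' (0 + j) = w[j]
    rw [← h2]
    simp only [wcat, zero_add]
    rw [dif_pos (by simp; omega)]
    exact List.getElem_append_left hju

end Aux

theorem genCyl_inter_shift_preimage_genCyl {A : Type*} (F : Set (List A)) (α β : List A)
    (hα : α ∈ Lang F) (hβ : β ∈ Lang F) (Fs Gs : Set A) (hFs : Fs.Finite) (hGs : Gs.Finite)
    (n : ℕ) (hn : n ≤ α.length) :
    genCyl F α Fs ∩ shiftO^[n] ⁻¹' genCyl F β Gs = ∅ ∨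
      ∃ γ ∈ Lang F, ∃ H : Set A, H.Finite ∧
        genCyl F α Fs ∩ shiftO^[n] ⁻¹' genCyl F β Gs = genCyl F γ H := by

  classical
  by_cases hne : (genCyl F α Fs ∩ shiftO^[n] ⁻¹' genCyl F β Gs).Nonempty
  · right
    obtain ⟨y₀, hy₀mem⟩ := hne
    have hy₀mem' := hy₀mem
    set γ := α ++ β.drop (α.length - n) with hγdef
    have hlen : γ.length = α.length + (β.length - (α.length - n)) := by
      simp [hγdef]
    have hLα : α.length ≤ γ.length := by omega
    have hLβ : n + β.length ≤ γ.length := by omega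
    have hγa : ∀ j (hj : j < α.length), γ[j]'(by omega) = α[j]'hj := by
      intro j hj
      simp only [hγdef]
      exact List.getElem_append_left hj
    have hγb : ∀ j (hj : j < γ.length), α.length ≤ j → ∀ hjb : j - n < β.length,
        γ[j]'hj = β[j - n]'hjb := by
      intro j hj hja hjb
      have hj' : j < (α ++ β.drop (α.length - n)).length := by
        simpa [hγdef] using hj
      have key : (α ++ β.drop (α.length - n))[j]'hj' = β[j - n]'hjb := by
        rw [List.getElem_append_right (by omega)]
        rw [List.getElem_drop]
        exact getElem_congr' β (by omega) _
      exact key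
    obtain ⟨⟨hy₀O, hy₀α, hy₀F⟩, hy₀S⟩ := hy₀mem
    obtain ⟨hy₀SO, hy₀β, hy₀G⟩ := hy₀S
    have hpre : ∀ y, y ∈ genCyl F α Fs ∩ shiftO^[n] ⁻¹' genCyl F β Gs →
        ∀ j, ∀ hj : j < γ.length, y j = some (γ[j]'hj) := by
      rintro y ⟨⟨hyO, hyα, hyF⟩, hyS⟩ j hj
      obtain ⟨hySO, hyβ, hyG⟩ := hyS
      by_cases hja : j < α.length
      · rw [hγa j hja]; exact hyα j hja
      · push_neg at hja
        have hjb : j - n < β.length := by omega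
        rw [hγb j hj hja (by omega)]
        have h := hyβ (j - n) hjb
        rw [shiftO_iterate_apply] at h
        rwa [show j - n + n = j by omega] at h
    refine ⟨γ, mem_lang_of_prefix hy₀O (hpre y₀ hy₀mem'),
      {a | (γ.length = α.length ∧ a ∈ Fs) ∨ (γ.length = n + β.length ∧ a ∈ Gs)},
      (hFs.union hGs).subset ?_, ?_⟩
    · rintro a (⟨_, h⟩ | ⟨_, h⟩)
      · exact Or.inl h
      · exact Or.inr h
    ext y
    constructor
    · intro hy
      have hyp := hpre y hy
      obtain ⟨⟨hyO, hyα, hyF⟩, hyS⟩ := hy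
      obtain ⟨hySO, hyβ, hyG⟩ := hyS
      refine ⟨hyO, hyp, ?_⟩
      rintro a (⟨hL, haF⟩ | ⟨hL, haG⟩)
      · rw [hL]; exact hyF a haF
      · rw [hL, show n + β.length = β.length + n by omega, ← shiftO_iterate_apply y n β.length]
        exact hyG a haG
    · rintro ⟨hyO, hyγ, hyH⟩
      refine ⟨⟨hyO, ?_, ?_⟩, ?_⟩
      · intro j hj
        have h1 := hyγ j (by omega)
        rwa [hγa j hj] at h1
      · intro a haF
        by_cases hLa : γ.length = α.length
        · have h := hyH a (Or.inl ⟨hLa, haF⟩)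
          rwa [hLa] at h
        · have hlt : α.length < γ.length := by omega
          intro heq
          have h1 := hyγ α.length hlt
          have h2 := hpre y₀ hy₀mem' α.length hlt
          have h3 : γ[α.length]'hlt = a := by
            rw [heq] at h1; exact Option.some.inj h1.symm
          exact hy₀F a haF (by rw [h2, h3])
      · refine ⟨shiftO_iterate_mem_OTW hyO n, ?_, ?_⟩
        · intro j hj
          rw [shiftO_iterate_apply]
          by_cases hja : j + n < α.length
          · have h1 := hyγ (j + n) (by omega)
            have h2 := hpre y₀ hy₀mem' (j + n) (by omega)
            have h3 := hy₀β j hj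
            rw [shiftO_iterate_apply] at h3
            rw [h1]
            rw [h2] at h3
            exact h3
          · have h1 := hyγ (j + n) (by omega)
            rw [hγb (j + n) (by omega) (by omega) (by omega)] at h1
            rw [h1]
            exact congrArg some (getElem_congr' β (by omega) _)
        · intro a haG
          rw [shiftO_iterate_apply]
          by_cases hLb : γ.length = n + β.length
          · have h := hyH a (Or.inr ⟨hLb, haG⟩)
            rwa [hLb, show n + β.length = β.length + n by omega] at h
          · have hlt : β.length + n < γ.length := by omega
            intro heq
            have h1 := hyγ (β.length + n) hlt
            have h2 := hpre y₀ hy₀mem' (β.length + n) hlt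
            have h3 : γ[β.length + n]'hlt = a := by
              rw [heq] at h1; exact Option.some.inj h1.symm
            apply hy₀G a haG
            rw [shiftO_iterate_apply, h2, h3]
  · exact Or.inl (Set.not_nonempty_iff_eq_empty.mp hne)
end

section
/- Let R be a commutative unital ring and let A be a commutative R-algebra that is generated, as an R-algebra, by its set of idempotents E(A). Suppose that for every r ∈ R and every e ∈ E(A), re = 0 implies r = 0 or e = 0. Then there is an isomorphism of R-algebras Φ : A → Lc(Ê(A), R) such that Φ(e) = 1_{O_e} for every e ∈ E(A). -/
/-- A Stone space: Hausdorff with a basis of compact open sets. -/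
def IsStoneSpace (X : Type*) [TopologicalSpace X] : Prop :=
  T2Space X ∧ TopologicalSpace.IsTopologicalBasis {U : Set X | IsCompact U ∧ IsOpen U}

/-- `R` is indecomposable: its only idempotents are `0` and `1`. -/
def IsIndecomposable (R : Type*) [CommRing R] : Prop :=
  ∀ r : R, IsIdempotentElem r → r = 0 ∨ r = 1

/-- The (possibly non-unital) `R`-algebra `Lc(Y,R)` of locally constant compactly
supported functions `Y → R`, as a non-unital subalgebra of `Y → R`. -/
def LcSub (R : Type*) [CommRing R] (Y : Type*) [TopologicalSpace Y] :
    NonUnitalSubalgebra R (Y → R) where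
  carrier := {f : Y → R | IsLocallyConstant f ∧ HasCompactSupport f}
  add_mem' := fun hf hg => ⟨hf.1.comp₂ hg.1 (· + ·), hf.2.add hg.2⟩
  zero_mem' := by
    refine ⟨IsLocallyConstant.const 0, ?_⟩
    rw [hasCompactSupport_def]
    simp
  mul_mem' := fun hf hg => ⟨hf.1.comp₂ hg.1 (· * ·), hf.2.mul_right⟩
  smul_mem' := fun c f hf =>
    ⟨hf.1.comp fun y => c • y, hf.2.mono (Function.support_const_smul_subset c f)⟩

/-- An ultrafilter (= prime filter) of the Boolean algebra `E(A)` of idempotents of a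
commutative algebra `A`, where `e ≤ f` iff `e * f = e`, `e ⊓ f = e * f` and
`e ⊔ f = e + f - e * f`. -/
structure IdemUltra (A : Type*) [NonUnitalCommRing A] where
  carrier : Set A
  idem : ∀ e ∈ carrier, IsIdempotentElem e
  nonempty : carrier.Nonempty
  zero_not_mem : (0 : A) ∉ carrier
  mul_mem : ∀ e ∈ carrier, ∀ f ∈ carrier, e * f ∈ carrier
  le_mem : ∀ e ∈ carrier, ∀ f : A, IsIdempotentElem f → e * f = e → f ∈ carrier
  prime : ∀ e f : A, IsIdempotentElem e → IsIdempotentElem f →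
    e + f - e * f ∈ carrier → e ∈ carrier ∨ f ∈ carrier

/-- The basic open set `O_e` of the Stone dual `Ê(A)`. -/
def OE {A : Type*} [NonUnitalCommRing A] (e : A) : Set (IdemUltra A) :=
  {ξ | e ∈ ξ.carrier}

/-- The Stone topology on `Ê(A)`, generated by the sets `O_e`. -/
instance (A : Type*) [NonUnitalCommRing A] : TopologicalSpace (IdemUltra A) :=
  TopologicalSpace.generateFrom {V | ∃ e : A, IsIdempotentElem e ∧ V = OE e}

/-- The topology of pointwise convergence (with `R` discrete) on the character space
`Â` of `R`-algebra homomorphisms `A → R`. -/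
instance charSpaceTopology (R : Type*) [CommRing R] (A : Type*) [NonUnitalCommRing A]
    [Module R A] : TopologicalSpace (A →ₙₐ[R] R) :=
  TopologicalSpace.induced (fun φ => (φ : A → R))
    (@Pi.topologicalSpace A (fun _ => R) fun _ => ⊥)

/-!
Every `a ∈ A` is an `R`-combination of idempotents, so at each ultrafilter `ξ` it acts on some
member `e ∈ ξ` as a scalar: `a e = r e`. Faithfulness makes `r` unique, and `Φ(a)(ξ) := r` is an
algebra homomorphism, constant on `O_e` and supported in `O_E` for a local unit `a E = a`.
If `Φ(a) = 0`, compactness of `O_E` gives an idempotent `J ≥ E` with `a J = 0`, so `a = a E J = 0`.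
The compact open subsets of `Ê(A)` are exactly the `O_e`, so every locally constant compactly
supported function is a finite combination of the functions `1_{O_e} = Φ(e)`.
-/

namespace IdemUltra

variable {A : Type*} [NonUnitalCommRing A] (ξ : IdemUltra A) {e f : A}

theorem mul_mem_iff (he : IsIdempotentElem e) (hf : IsIdempotentElem f) :
    e * f ∈ ξ.carrier ↔ e ∈ ξ.carrier ∧ f ∈ ξ.carrier :=
  ⟨fun h => ⟨ξ.le_mem _ h e he (by rw [mul_right_comm, he.eq]),
      ξ.le_mem _ h f hf (by rw [mul_assoc, hf.eq])⟩,
    fun h => ξ.mul_mem e h.1 f h.2⟩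

theorem sup_mem_iff (he : IsIdempotentElem e) (hf : IsIdempotentElem f) :
    e + f - e * f ∈ ξ.carrier ↔ e ∈ ξ.carrier ∨ f ∈ ξ.carrier := by
  have hsup : IsIdempotentElem (e + f - e * f) :=
    IsIdempotentElem.add_sub_mul_of_commute (.all e f) he hf
  refine ⟨ξ.prime e f he hf, ?_⟩
  rintro (h | h)
  · exact ξ.le_mem e h _ hsup (by rw [mul_sub, mul_add, ← mul_assoc, he.eq, add_sub_cancel_right])
  · exact ξ.le_mem f h _ hsup
      (by rw [mul_sub, mul_add, mul_left_comm, hf.eq, mul_comm f e, add_sub_cancel_left])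

theorem exists_mul_eq_zero_of_notMem (he : IsIdempotentElem e) (h : e ∉ ξ.carrier) :
    ∃ g ∈ ξ.carrier, e * g = 0 := by
  obtain ⟨m, hm⟩ := ξ.nonempty
  have hmI := ξ.idem m hm
  have hmeI : IsIdempotentElem (m * e) := hmI.mul he
  have hgI : IsIdempotentElem (m - m * e) :=
    hmeI.sub hmI (by rw [mul_right_comm, hmI.eq]) (by rw [← mul_assoc, hmI.eq])
  -- `m` is the disjoint join of `m - m * e` and `m * e`, and the latter cannot lie in `ξ`.
  have horth : (m - m * e) * (m * e) = 0 := by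
    rw [sub_mul, ← mul_assoc, hmI.eq, hmeI.eq, sub_self]
  have hjoin : (m - m * e) + m * e - (m - m * e) * (m * e) ∈ ξ.carrier := by
    rwa [horth, sub_zero, sub_add_cancel]
  refine ⟨m - m * e, ?_, ?_⟩
  · exact ((ξ.sup_mem_iff hgI hmeI).1 hjoin).resolve_right fun hme =>
      h ((ξ.mul_mem_iff hmI he).1 hme).2
  · rw [mul_sub, mul_left_comm, he.eq, mul_comm, sub_self]

end IdemUltra

section StoneSpace

open TopologicalSpace

variable {A : Type*} [NonUnitalCommRing A] {e f : A}

theorem OE_zero : OE (0 : A) = ∅ :=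
  Set.eq_empty_of_forall_notMem fun ξ => ξ.zero_not_mem

theorem OE_mul (he : IsIdempotentElem e) (hf : IsIdempotentElem f) :
    OE (e * f) = OE e ∩ OE f :=
  Set.ext fun ξ => ξ.mul_mem_iff he hf

theorem OE_sup (he : IsIdempotentElem e) (hf : IsIdempotentElem f) :
    OE (e + f - e * f) = OE e ∪ OE f :=
  Set.ext fun ξ => ξ.sup_mem_iff he hf

theorem isTopologicalBasis_OE :
    IsTopologicalBasis (Set.range fun e : {e : A // IsIdempotentElem e} => OE (e : A)) := by
  refine ⟨?_, ?_, ?_⟩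
  · rintro _ ⟨⟨e, he⟩, rfl⟩ _ ⟨⟨f, hf⟩, rfl⟩ ξ hξ
    exact ⟨OE (e * f), ⟨⟨e * f, he.mul hf⟩, rfl⟩, by rwa [OE_mul he hf], (OE_mul he hf).subset⟩
  · refine Set.eq_univ_of_forall fun ξ => ?_
    obtain ⟨m, hm⟩ := ξ.nonempty
    exact ⟨OE m, ⟨⟨m, ξ.idem m hm⟩, rfl⟩, hm⟩
  · exact congrArg generateFrom <| Set.ext fun V =>
      ⟨fun ⟨e, he, hV⟩ => ⟨⟨e, he⟩, hV.symm⟩, fun ⟨e, he⟩ => ⟨e, e.2, he.symm⟩⟩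

theorem isOpen_OE (he : IsIdempotentElem e) : IsOpen (OE e) :=
  isTopologicalBasis_OE.isOpen ⟨⟨e, he⟩, rfl⟩

theorem isClosed_OE (he : IsIdempotentElem e) : IsClosed (OE e) := by
  refine isOpen_compl_iff.1 (isOpen_iff_forall_mem_open.2 fun ξ hξ => ?_)
  obtain ⟨g, hg, heg⟩ := ξ.exists_mul_eq_zero_of_notMem he hξ
  refine ⟨OE g, fun η hη hηe => η.zero_not_mem ?_, isOpen_OE (ξ.idem g hg), hg⟩
  rw [← heg]
  exact η.mul_mem e hηe g hη

def IdemUltra.ofUltrafilter (𝒰 : Ultrafilter (IdemUltra A)) (he : OE e ∈ 𝒰) : IdemUltra A where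
  carrier := {f | OE f ∈ 𝒰}
  idem f hf := by
    obtain ⟨ξ, hξ⟩ := Ultrafilter.nonempty_of_mem hf
    exact ξ.idem f hξ
  nonempty := ⟨e, he⟩
  zero_not_mem := by
    change OE (0 : A) ∉ 𝒰
    rw [OE_zero]
    exact Ultrafilter.empty_notMem
  mul_mem f hf g hg := Filter.mem_of_superset (Filter.inter_mem hf hg)
    fun ξ hξ => ξ.mul_mem f hξ.1 g hξ.2
  le_mem f hf g hg hfg := Filter.mem_of_superset hf fun ξ hξ => ξ.le_mem f hξ g hg hfg
  prime f g hf hg hfg := Ultrafilter.union_mem_iff.1 (OE_sup hf hg ▸ hfg)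

theorem isCompact_OE : IsCompact (OE e) := by
  refine isCompact_iff_ultrafilter_le_nhds.2 fun 𝒰 h𝒰 => ?_
  have he : OE e ∈ 𝒰 := Filter.le_principal_iff.1 h𝒰
  refine ⟨IdemUltra.ofUltrafilter 𝒰 he, show OE e ∈ 𝒰 from he, ?_⟩
  refine (isTopologicalBasis_OE.nhds_hasBasis).ge_iff.2 ?_
  rintro _ ⟨⟨⟨f, hf⟩, rfl⟩, hmem⟩
  exact show OE f ∈ 𝒰 from hmem

/-- As `p` is not nilpotent, some prime ideal `P` of the unitization avoids it, and the
idempotents outside `P` form an ultrafilter. -/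
theorem IdemUltra.exists_mem_of_ne_zero {p : A} (hp : IsIdempotentElem p) (hp0 : p ≠ 0) :
    ∃ ξ : IdemUltra A, p ∈ ξ.carrier := by
  have hpB : IsIdempotentElem (p : Unitization ℤ A) := by
    rw [IsIdempotentElem, ← Unitization.inr_mul, hp.eq]
  have hnil : ¬ IsNilpotent (p : Unitization ℤ A) := fun h =>
    hp0 <| Unitization.inr_injective (R := ℤ) <| by
      rw [IsIdempotentElem.eq_zero_of_isNilpotent (R := Unitization ℤ A) hpB h,
        Unitization.inr_zero]
  obtain ⟨P, hP, hpP⟩ :=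
    not_forall₂.1 (mt (nilpotent_iff_mem_prime (R := Unitization ℤ A)).2 hnil)
  refine ⟨⟨{e | IsIdempotentElem e ∧ (e : Unitization ℤ A) ∉ P}, fun e he => he.1, ⟨p, hp, hpP⟩,
    fun h => h.2 (by simp), ?_, ?_, ?_⟩, hp, hpP⟩
  · rintro e ⟨he, heP⟩ f ⟨hf, hfP⟩
    refine ⟨he.mul hf, ?_⟩
    rw [Unitization.inr_mul]
    exact hP.mul_notMem heP hfP
  · rintro e ⟨-, heP⟩ f hf hef
    refine ⟨hf, fun hfP => heP ?_⟩
    rw [← hef, Unitization.inr_mul]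
    exact P.mul_mem_left _ hfP
  · rintro e f he hf ⟨-, hsup⟩
    by_contra! h
    have heP : (e : Unitization ℤ A) ∈ P := not_not.1 fun heP => h.1 ⟨he, heP⟩
    have hfP : (f : Unitization ℤ A) ∈ P := not_not.1 fun hfP => h.2 ⟨hf, hfP⟩
    refine hsup ?_
    have hsupB : ((e + f - e * f : A) : Unitization ℤ A) = e + (1 - e) * f := by
      rw [Unitization.inr_sub, Unitization.inr_add, Unitization.inr_mul]
      ring
    rw [hsupB]
    exact P.add_mem heP (P.mul_mem_left _ hfP)

theorem mul_eq_left_of_OE_subset (he : IsIdempotentElem e) (hf : IsIdempotentElem f)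
    (h : OE e ⊆ OE f) : e * f = e := by
  have hefI : IsIdempotentElem (e * f) := he.mul hf
  have hdI : IsIdempotentElem (e - e * f) :=
    hefI.sub he (by rw [mul_right_comm, he.eq]) (by rw [← mul_assoc, he.eq])
  by_contra hne
  obtain ⟨ξ, hξ⟩ := IdemUltra.exists_mem_of_ne_zero hdI (sub_ne_zero.2 (Ne.symm hne))
  have heξ : e ∈ ξ.carrier :=
    ξ.le_mem _ hξ e he (by rw [sub_mul, he.eq, mul_right_comm, he.eq])
  have hzero : (e - e * f) * f = 0 := by rw [sub_mul, mul_assoc, hf.eq, sub_self]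
  exact ξ.zero_not_mem (hzero ▸ ξ.mul_mem _ hξ f (h heξ))

theorem exists_OE_eq_biUnion {p : A → Prop} (hp0 : p 0)
    (hpsup : ∀ e f, p e → p f → p (e + f - e * f)) {ι : Type*} (s : Finset ι) (g : ι → A)
    (hg : ∀ i ∈ s, IsIdempotentElem (g i) ∧ p (g i)) :
    ∃ J, IsIdempotentElem J ∧ p J ∧ OE J = ⋃ i ∈ s, OE (g i) := by
  classical
  induction s using Finset.induction with
  | empty => exact ⟨0, .zero, hp0, by simp [OE_zero]⟩
  | insert i s _ ih =>
    obtain ⟨hgi, hpi⟩ := hg i (Finset.mem_insert_self i s)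
    obtain ⟨J, hJ, hpJ, hJs⟩ := ih fun j hj => hg j (Finset.mem_insert_of_mem hj)
    refine ⟨g i + J - g i * J, IsIdempotentElem.add_sub_mul_of_commute (.all _ _) hgi hJ,
      hpsup _ _ hpi hpJ, ?_⟩
    rw [OE_sup hgi hJ, hJs, Finset.set_biUnion_insert]

theorem exists_OE_eq_of_isCompact_of_isOpen {U : Set (IdemUltra A)} (hc : IsCompact U)
    (ho : IsOpen U) : ∃ E, IsIdempotentElem E ∧ OE E = U := by
  obtain ⟨s, hs, rfl⟩ := (isCompact_open_iff_eq_finite_iUnion_of_isTopologicalBasis _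
    isTopologicalBasis_OE (fun e => isCompact_OE) U).1 ⟨hc, ho⟩
  obtain ⟨E, hE, -, hEs⟩ := exists_OE_eq_biUnion (p := fun _ => True) trivial
    (fun _ _ _ _ => trivial) hs.toFinset Subtype.val fun e _ => ⟨e.2, trivial⟩
  exact ⟨E, hE, by simpa using hEs⟩

end StoneSpace

section Evaluation

variable {R : Type*} [CommRing R] {A : Type*} [NonUnitalCommRing A] [Module R A]

namespace IdemUltra

variable (ξ : IdemUltra A) {a b e : A} {r s : R}

def HasValue (a : A) (r : R) : Prop :=
  ∃ e ∈ ξ.carrier, a * e = r • e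

theorem hasValue_of_mem (he : e ∈ ξ.carrier) : ξ.HasValue e (1 : R) :=
  ⟨e, he, by rw [(ξ.idem e he).eq, one_smul]⟩

theorem hasValue_of_notMem (he : IsIdempotentElem e) (h : e ∉ ξ.carrier) :
    ξ.HasValue e (0 : R) :=
  let ⟨g, hg, heg⟩ := ξ.exists_mul_eq_zero_of_notMem he h
  ⟨g, hg, by rw [heg, zero_smul]⟩

theorem hasValue_zero : ξ.HasValue (0 : A) (0 : R) :=
  let ⟨m, hm⟩ := ξ.nonempty
  ⟨m, hm, by rw [zero_mul, zero_smul]⟩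

variable {ξ} [IsScalarTower R A A]

theorem HasValue.smul (h : ξ.HasValue a r) (s : R) : ξ.HasValue (s • a) (s * r) :=
  let ⟨e, he, hae⟩ := h
  ⟨e, he, by rw [smul_mul_assoc, hae, smul_smul]⟩

variable [SMulCommClass R A A]

theorem HasValue.add (ha : ξ.HasValue a r) (hb : ξ.HasValue b s) : ξ.HasValue (a + b) (r + s) := by
  obtain ⟨e, he, hae⟩ := ha
  obtain ⟨f, hf, hbf⟩ := hb
  refine ⟨e * f, ξ.mul_mem e he f hf, ?_⟩
  rw [add_mul, ← mul_assoc, hae, mul_left_comm, hbf, smul_mul_assoc, mul_smul_comm, add_smul]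

theorem HasValue.mul (ha : ξ.HasValue a r) (hb : ξ.HasValue b s) : ξ.HasValue (a * b) (r * s) := by
  obtain ⟨e, he, hae⟩ := ha
  obtain ⟨f, hf, hbf⟩ := hb
  refine ⟨e * f, ξ.mul_mem e he f hf, ?_⟩
  rw [mul_mul_mul_comm, hae, hbf, smul_mul_smul_comm]

theorem HasValue.unique
    (hfaith : ∀ (r : R) (e : A), IsIdempotentElem e → r • e = 0 → r = 0 ∨ e = 0)
    (hr : ξ.HasValue a r) (hs : ξ.HasValue a s) : r = s := by
  obtain ⟨e, he, hae⟩ := hr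
  obtain ⟨f, hf, haf⟩ := hs
  have hef := ξ.mul_mem e he f hf
  have hdiff : (r - s) • (e * f) = 0 := by
    rw [sub_smul, ← smul_mul_assoc, ← hae, ← mul_smul_comm, ← haf, mul_assoc, mul_left_comm,
      sub_self]
  refine ((hfaith _ _ (ξ.idem _ hef) hdiff).resolve_right fun h0 => ξ.zero_not_mem ?_)
    |> sub_eq_zero.1
  rwa [← h0]

variable (R) in
noncomputable def eval (ξ : IdemUltra A) (a : A) : R :=
  Classical.epsilon (ξ.HasValue a)

theorem eval_eq (hfaith : ∀ (r : R) (e : A), IsIdempotentElem e → r • e = 0 → r = 0 ∨ e = 0)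
    (h : ξ.HasValue a r) : ξ.eval R a = r :=
  (Classical.epsilon_spec ⟨r, h⟩).unique hfaith h

end IdemUltra

variable [IsScalarTower R A A] [SMulCommClass R A A]

theorem mem_span_idempotents
    (hgen : NonUnitalAlgebra.adjoin R {e : A | IsIdempotentElem e} = ⊤) (a : A) :
    a ∈ Submodule.span R {e : A | IsIdempotentElem e} := by
  have hclosure : (Subsemigroup.closure {e : A | IsIdempotentElem e} : Set A) ⊆
      {e | IsIdempotentElem e} := fun x hx => by
    induction hx using Subsemigroup.closure_induction with
    | mem x hx => exact hx
    | mul x y _ _ hx hy => exact hx.mul hy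
  have ha : a ∈ (NonUnitalAlgebra.adjoin R {e : A | IsIdempotentElem e}).toSubmodule := by
    rw [hgen]
    trivial
  rw [NonUnitalAlgebra.adjoin_eq_span] at ha
  exact Submodule.span_mono hclosure ha

theorem exists_idempotent_mul_eq_self
    (hgen : NonUnitalAlgebra.adjoin R {e : A | IsIdempotentElem e} = ⊤) (a : A) :
    ∃ E, IsIdempotentElem E ∧ a * E = a := by
  induction mem_span_idempotents hgen a using Submodule.span_induction with
  | mem x hx => exact ⟨x, hx, hx.eq⟩
  | zero => exact ⟨0, .zero, zero_mul 0⟩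
  | add x y _ _ hx hy =>
    obtain ⟨E₁, hE₁, hxE⟩ := hx
    obtain ⟨E₂, hE₂, hyE⟩ := hy
    refine ⟨E₁ + E₂ - E₁ * E₂, IsIdempotentElem.add_sub_mul_of_commute (.all _ _) hE₁ hE₂, ?_⟩
    rw [add_mul, mul_sub, mul_add, ← mul_assoc, hxE, add_sub_cancel_right, mul_sub, mul_add,
      hyE, mul_comm E₁ E₂, ← mul_assoc, hyE, add_sub_cancel_left]
  | smul s x _ hx =>
    obtain ⟨E, hE, hxE⟩ := hx
    exact ⟨E, hE, by rw [smul_mul_assoc, hxE]⟩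

theorem IdemUltra.exists_hasValue
    (hgen : NonUnitalAlgebra.adjoin R {e : A | IsIdempotentElem e} = ⊤)
    (ξ : IdemUltra A) (a : A) : ∃ r : R, ξ.HasValue a r := by
  induction mem_span_idempotents hgen a using Submodule.span_induction with
  | mem x hx =>
    by_cases hxξ : x ∈ ξ.carrier
    · exact ⟨1, ξ.hasValue_of_mem hxξ⟩
    · exact ⟨0, ξ.hasValue_of_notMem hx hxξ⟩
  | zero => exact ⟨0, ξ.hasValue_zero⟩
  | add x y _ _ hx hy =>
    obtain ⟨r, hr⟩ := hx
    obtain ⟨s, hs⟩ := hy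
    exact ⟨r + s, hr.add hs⟩
  | smul s x _ hx =>
    obtain ⟨r, hr⟩ := hx
    exact ⟨s * r, hr.smul s⟩

end Evaluation

theorem IsLocallyConstant.exists_eq_sum_indicator {X M : Type*} [TopologicalSpace X]
    [AddCommMonoid M] {f : X → M} (hf : IsLocallyConstant f) (hc : HasCompactSupport f) :
    ∃ T : Finset M, (∀ r ∈ T, IsCompact (f ⁻¹' {r}) ∧ IsOpen (f ⁻¹' {r})) ∧
      f = ∑ r ∈ T, (f ⁻¹' {r}).indicator fun _ => r := by
  classical
  let _ : TopologicalSpace M := ⊥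
  have : DiscreteTopology M := ⟨rfl⟩
  have hfin : (f '' tsupport f).Finite := (hc.image hf.continuous).finite_of_discrete
  refine ⟨hfin.toFinset.erase 0, fun r hr => ⟨?_, hf.isOpen_fiber r⟩, funext fun x => ?_⟩
  · refine hc.of_isClosed_subset (hf.isClosed_fiber r) fun x hx => subset_tsupport f ?_
    exact (Set.mem_preimage.1 hx).trans_ne (Finset.ne_of_mem_erase hr)
  · simp only [Finset.sum_apply, Set.indicator, Set.mem_preimage, Set.mem_singleton_iff]
    rw [Finset.sum_ite_eq]
    split_ifs with hx
    · rfl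
    · by_contra hfx
      exact hx (Finset.mem_erase.2 ⟨hfx, hfin.mem_toFinset.2 ⟨x, subset_tsupport f hfx, rfl⟩⟩)

section KeimelIsomorphism

open IdemUltra

variable {R : Type*} [CommRing R] {A : Type*} [NonUnitalCommRing A] [Module R A]
  [IsScalarTower R A A] [SMulCommClass R A A]

/-- The isomorphism `Φ` of the theorem, with codomain all functions `Ê(A) → R`. -/
noncomputable def evalHom (hgen : NonUnitalAlgebra.adjoin R {e : A | IsIdempotentElem e} = ⊤)
    (hfaith : ∀ (r : R) (e : A), IsIdempotentElem e → r • e = 0 → r = 0 ∨ e = 0) :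
    A →ₙₐ[R] (IdemUltra A → R) where
  toFun a ξ := ξ.eval R a
  map_smul' s a := funext fun ξ => by
    obtain ⟨_, h⟩ := exists_hasValue hgen ξ a
    simp only [Pi.smul_apply, smul_eq_mul, MonoidHom.id_apply, eval_eq hfaith h,
      eval_eq hfaith (h.smul s)]
  map_zero' := funext fun ξ => eval_eq hfaith ξ.hasValue_zero
  map_add' a b := funext fun ξ => by
    obtain ⟨_, ha⟩ := exists_hasValue hgen ξ a
    obtain ⟨_, hb⟩ := exists_hasValue hgen ξ b
    simp only [Pi.add_apply, eval_eq hfaith ha, eval_eq hfaith hb, eval_eq hfaith (ha.add hb)]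
  map_mul' a b := funext fun ξ => by
    obtain ⟨_, ha⟩ := exists_hasValue hgen ξ a
    obtain ⟨_, hb⟩ := exists_hasValue hgen ξ b
    simp only [Pi.mul_apply, eval_eq hfaith ha, eval_eq hfaith hb, eval_eq hfaith (ha.mul hb)]

variable (hgen : NonUnitalAlgebra.adjoin R {e : A | IsIdempotentElem e} = ⊤)
  (hfaith : ∀ (r : R) (e : A), IsIdempotentElem e → r • e = 0 → r = 0 ∨ e = 0)

theorem evalHom_apply_of_hasValue {a : A} {ξ : IdemUltra A} {r : R} (h : ξ.HasValue a r) :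
    evalHom hgen hfaith a ξ = r :=
  eval_eq hfaith h

theorem evalHom_of_isIdempotentElem {e : A} (he : IsIdempotentElem e) :
    evalHom hgen hfaith e = (OE e).indicator fun _ => 1 := by
  funext ξ
  by_cases hξ : e ∈ ξ.carrier
  · rw [Set.indicator_of_mem (show ξ ∈ OE e from hξ),
      evalHom_apply_of_hasValue hgen hfaith (ξ.hasValue_of_mem hξ)]
  · rw [Set.indicator_of_notMem (show ξ ∉ OE e from hξ),
      evalHom_apply_of_hasValue hgen hfaith (ξ.hasValue_of_notMem he hξ)]

theorem evalHom_mem_LcSub (a : A) : evalHom hgen hfaith a ∈ LcSub R (IdemUltra A) := by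
  refine ⟨IsLocallyConstant.iff_exists_open _ |>.2 fun ξ => ?_, ?_⟩
  · obtain ⟨r, e, he, hae⟩ := exists_hasValue hgen ξ a
    refine ⟨OE e, isOpen_OE (ξ.idem e he), he, fun η hη => ?_⟩
    rw [evalHom_apply_of_hasValue hgen hfaith ⟨e, hη, hae⟩,
      evalHom_apply_of_hasValue hgen hfaith ⟨e, he, hae⟩]
  · obtain ⟨E, hE, haE⟩ := exists_idempotent_mul_eq_self hgen a
    refine HasCompactSupport.intro' isCompact_OE (isClosed_OE hE) fun ξ hξ => ?_
    obtain ⟨g, hg, hEg⟩ := ξ.exists_mul_eq_zero_of_notMem hE hξ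
    refine evalHom_apply_of_hasValue hgen hfaith ⟨g, hg, ?_⟩
    rw [zero_smul, ← haE, mul_assoc, hEg, mul_zero]

theorem evalHom_injective : Function.Injective (evalHom hgen hfaith) := by
  refine (injective_iff_map_eq_zero _).2 fun a ha => ?_
  obtain ⟨E, hE, haE⟩ := exists_idempotent_mul_eq_self hgen a
  have hkill : ∀ ξ : IdemUltra A, ∃ e ∈ ξ.carrier, a * e = 0 := fun ξ => by
    obtain ⟨r, e, he, hae⟩ := exists_hasValue hgen ξ a
    rw [← evalHom_apply_of_hasValue hgen hfaith ⟨e, he, hae⟩, ha, Pi.zero_apply, zero_smul] at hae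
    exact ⟨e, he, hae⟩
  choose g hg hag using hkill
  obtain ⟨t, ht⟩ := isCompact_OE.elim_finite_subcover (fun ξ => OE (g ξ))
    (fun ξ => isOpen_OE (ξ.idem _ (hg ξ))) fun ξ _ => Set.mem_iUnion.2 ⟨ξ, hg ξ⟩
  obtain ⟨J, hJ, haJ, hJt⟩ := exists_OE_eq_biUnion (p := fun x => a * x = 0) (mul_zero a)
    (fun e f he hf => by
      rw [mul_sub, mul_add, he, hf, ← mul_assoc, he, zero_mul, sub_zero, add_zero])
    t g fun ξ _ => ⟨ξ.idem _ (hg ξ), hag ξ⟩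
  rw [← haE, ← mul_eq_left_of_OE_subset hE hJ (hJt ▸ ht), ← mul_assoc, haE, haJ]

theorem exists_evalHom_eq {f : IdemUltra A → R} (hf : f ∈ LcSub R (IdemUltra A)) :
    ∃ a, evalHom hgen hfaith a = f := by
  obtain ⟨T, hT, hfT⟩ := hf.1.exists_eq_sum_indicator hf.2
  choose! E hE hET using fun r hr => exists_OE_eq_of_isCompact_of_isOpen (hT r hr).1 (hT r hr).2
  refine ⟨∑ r ∈ T, r • E r, ?_⟩
  rw [map_sum]
  refine (Finset.sum_congr rfl fun r hr => ?_).trans hfT.symm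
  rw [map_smul, evalHom_of_isIdempotentElem hgen hfaith (hE r hr), hET r hr]
  ext ξ
  by_cases hξ : ξ ∈ f ⁻¹' {r} <;> simp [hξ]

end KeimelIsomorphism

theorem keimel_iso_Lc (R : Type*) [CommRing R] (A : Type*) [NonUnitalCommRing A]
    [Module R A] [SMulCommClass R A A] [IsScalarTower R A A]
    (hgen : NonUnitalAlgebra.adjoin R {e : A | IsIdempotentElem e} = ⊤)
    (hfaith : ∀ (r : R) (e : A), IsIdempotentElem e → r • e = 0 → r = 0 ∨ e = 0) :
    ∃ Φ : A →ₙₐ[R] ↥(LcSub R (IdemUltra A)),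
      Function.Bijective Φ ∧
      ∀ e : A, IsIdempotentElem e →
        (↑(Φ e) : IdemUltra A → R) = Set.indicator (OE e) fun _ => 1 := by
  refine ⟨NonUnitalAlgHom.codRestrict (evalHom hgen hfaith) _ (evalHom_mem_LcSub hgen hfaith),
    ⟨fun a b hab => evalHom_injective hgen hfaith (congrArg Subtype.val hab), ?_⟩,
    fun e he => evalHom_of_isIdempotentElem hgen hfaith he⟩
  rintro ⟨f, hf⟩
  obtain ⟨a, rfl⟩ := exists_evalHom_eq hgen hfaith hf
  exact ⟨a, rfl⟩
end

section
/- Let X be a subshift over an alphabet 𝒜, let a ∈ 𝒜 and A ∈ 𝒰, and set aA := {ax ∈ X : x ∈ A}. Then: (i) aA ∈ 𝒰; (ii) r(aA, a) ⊆ A; and (iii) if B ∈ 𝒰 satisfies B ⊆ Z_a and r(B,a) ⊆ A, then B ⊆ aA. -/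
open Set

/-- The set `aA = {a x ∈ X : x ∈ A}`. -/
def aCopy {A : Type*} (F : Set (List A)) (a : A) (S : Set (ℕ → A)) : Set (ℕ → A) :=
  {y | y ∈ SubshiftOf F ∧ ∃ x ∈ S, y = wcat [a] x}


section AuxACopy

variable {A : Type*}

private lemma wcat_nil' (x : ℕ → A) : wcat ([] : List A) x = x := by
  funext n; simp [wcat]

private lemma wcat_one_succ (a : A) (x : ℕ → A) (n : ℕ) :
    wcat [a] x (n + 1) = x n := by simp [wcat]

private lemma wcat_cons' (a : A) (β : List A) (x : ℕ → A) :
    wcat (a :: β) x = wcat [a] (wcat β x) := by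
  funext n
  cases n with
  | zero => simp [wcat]
  | succ n =>
    rw [wcat_one_succ]
    simp only [wcat, List.length_cons]
    by_cases h : n < β.length
    · rw [dif_pos (by omega), dif_pos h]
      simp
    · rw [dif_neg (by omega), dif_neg h]
      congr 1; omega

private lemma wcat_one_inj {a : A} {x x' : ℕ → A} (h : wcat [a] x = wcat [a] x') :
    x = x' := by
  funext n
  have := congrFun h (n + 1)
  rwa [wcat_one_succ, wcat_one_succ] at this

private lemma shift_mem {F : Set (List A)} {a : A} {x : ℕ → A}
    (h : wcat [a] x ∈ SubshiftOf F) : x ∈ SubshiftOf F := by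
  intro w hw i hb
  refine h w hw (i + 1) (fun j hj => ?_)
  have he : i + 1 + j = (i + j) + 1 := by omega
  rw [he, wcat_one_succ]
  exact hb j hj

private lemma mem_lang_of_wcat {F : Set (List A)} {w : List A} {x : ℕ → A}
    (h : wcat w x ∈ SubshiftOf F) : w ∈ Lang F :=
  ⟨wcat w x, h, 0, fun j hj => by simp [wcat, hj]⟩

private lemma nil_lang_of_lang {F : Set (List A)} {w : List A} (h : w ∈ Lang F) :
    ([] : List A) ∈ Lang F := by
  obtain ⟨x, hx, i, -⟩ := h
  exact ⟨x, hx, 0, fun j hj => by simp at hj⟩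

private lemma nil_lang_of_InU {F : Set (List A)} {S : Set (ℕ → A)} (h : InU F S) :
    ([] : List A) ∈ Lang F := by
  induction h with
  | base hα _ => exact nil_lang_of_lang hα
  | union _ _ ih _ => exact ih
  | inter _ _ ih _ => exact ih
  | compl _ ih => exact ih

private lemma Cset_nil_nil {F : Set (List A)} : Cset F ([] : List A) [] = SubshiftOf F := by
  ext y
  constructor
  · rintro ⟨x, rfl, hx, -⟩; rwa [wcat_nil']
  · intro hy; exact ⟨y, (wcat_nil' y).symm, by rwa [wcat_nil'], by rwa [wcat_nil']⟩

private lemma InU_empty {F : Set (List A)} (h : ([] : List A) ∈ Lang F) :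
    InU F (∅ : Set (ℕ → A)) := by
  have := InU.compl (InU.base h h)
  rwa [Cset_nil_nil, diff_self] at this

private lemma aCopy_Cset {F : Set (List A)} {a : A} {α β : List A} :
    aCopy F a (Cset F α β) = Cset F α (a :: β) := by
  ext y
  constructor
  · rintro ⟨hy, z, ⟨x, rfl, hz, hα⟩, rfl⟩
    rw [← wcat_cons'] at hy ⊢
    exact ⟨x, rfl, hy, hα⟩
  · rintro ⟨x, rfl, hX, hα⟩
    rw [wcat_cons'] at hX ⊢
    exact ⟨hX, wcat β x, ⟨x, rfl, shift_mem hX, hα⟩, rfl⟩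

private lemma aCopy_union {F : Set (List A)} {a : A} {S T : Set (ℕ → A)} :
    aCopy F a (S ∪ T) = aCopy F a S ∪ aCopy F a T := by
  ext y
  constructor
  · rintro ⟨hy, x, hx | hx, rfl⟩
    · exact Or.inl ⟨hy, x, hx, rfl⟩
    · exact Or.inr ⟨hy, x, hx, rfl⟩
  · rintro (⟨hy, x, hx, rfl⟩ | ⟨hy, x, hx, rfl⟩)
    · exact ⟨hy, x, Or.inl hx, rfl⟩
    · exact ⟨hy, x, Or.inr hx, rfl⟩

private lemma aCopy_inter {F : Set (List A)} {a : A} {S T : Set (ℕ → A)} :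
    aCopy F a (S ∩ T) = aCopy F a S ∩ aCopy F a T := by
  ext y
  constructor
  · rintro ⟨hy, x, ⟨h1, h2⟩, rfl⟩
    exact ⟨⟨hy, x, h1, rfl⟩, ⟨hy, x, h2, rfl⟩⟩
  · rintro ⟨⟨hy, x, h1, rfl⟩, ⟨-, x', h2, hx'⟩⟩
    exact ⟨hy, x, ⟨h1, (wcat_one_inj hx') ▸ h2⟩, rfl⟩

private lemma aCopy_diff {F : Set (List A)} {a : A} {S : Set (ℕ → A)} :
    aCopy F a (SubshiftOf F \ S) = Cset F [] [a] ∩ (SubshiftOf F \ aCopy F a S) := by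
  ext y
  constructor
  · rintro ⟨hy, x, ⟨hxX, hxS⟩, rfl⟩
    refine ⟨⟨x, rfl, hy, by rwa [wcat_nil']⟩, hy, ?_⟩
    rintro ⟨-, x', hx', heq⟩
    exact hxS ((wcat_one_inj heq) ▸ hx')
  · rintro ⟨⟨x, rfl, hX, hxX⟩, -, hnot⟩
    rw [wcat_nil'] at hxX
    exact ⟨hX, x, ⟨hxX, fun hxS => hnot ⟨hX, x, hxS, rfl⟩⟩, rfl⟩

private lemma InU_aCopy {F : Set (List A)} (a : A) {S : Set (ℕ → A)} (hS : InU F S) :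
    InU F (aCopy F a S) := by
  induction hS with
  | @base α β hα hβ =>
    rw [aCopy_Cset]
    by_cases h : (a :: β) ∈ Lang F
    · exact InU.base hα h
    · have he : Cset F α (a :: β) = ∅ := by
        ext y
        simp only [mem_empty_iff_false, iff_false]
        rintro ⟨x, rfl, hX, -⟩
        exact h (mem_lang_of_wcat hX)
      rw [he]; exact InU_empty (nil_lang_of_lang hα)
  | union h1 h2 ih1 ih2 => rw [aCopy_union]; exact InU.union ih1 ih2
  | inter h1 h2 ih1 ih2 => rw [aCopy_inter]; exact InU.inter ih1 ih2
  | @compl S h ih =>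
    by_cases hl : [a] ∈ Lang F
    · rw [aCopy_diff]
      exact InU.inter (InU.base (nil_lang_of_InU h) hl) (InU.compl ih)
    · have he : aCopy F a (SubshiftOf F \ S) = ∅ := by
        ext y
        simp only [mem_empty_iff_false, iff_false]
        rintro ⟨hy, x, -, rfl⟩
        exact hl (mem_lang_of_wcat hy)
      rw [he]; exact InU_empty (nil_lang_of_InU h)

end AuxACopy

theorem aCopy_mem_U_and_relRange {A : Type*} (F : Set (List A)) (a : A)
    (S : Set (ℕ → A)) (hS : InU F S) :
    InU F (aCopy F a S) ∧
      relRange F (aCopy F a S) [a] ⊆ S ∧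
      ∀ B : Set (ℕ → A), InU F B → B ⊆ Zcyl F [a] → relRange F B [a] ⊆ S →
        B ⊆ aCopy F a S := by
  refine ⟨InU_aCopy a hS, ?_, ?_⟩
  · rintro x ⟨hxX, -, x', hx'S, heq⟩
    exact (wcat_one_inj heq) ▸ hx'S
  · intro B _ hBZ hBr y hyB
    obtain ⟨x, rfl, hX, hxX⟩ := hBZ hyB
    rw [wcat_nil'] at hxX
    exact ⟨hX, x, hBr ⟨hxX, hyB⟩, rfl⟩
end

section
/- Let X be a subshift over an alphabet 𝒜 and let α, β, γ, δ ∈ L_X be such that δ = βδ′ for some word δ′ and αβ⁻¹ is in reduced form. Let τ̂_{αβ⁻¹} : C(α,β) → C(β,α) be the bijection defined by τ̂_{αβ⁻¹}(βx) = αx (for every βx ∈ C(α,β)). Then τ̂_{αβ⁻¹}(C(γ,δ) ∩ C(α,β)) = C(γ, αδ′) ∩ C(β,α). -/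
open Set

theorem wcat_append' {A : Type*} (u v : List A) (x : ℕ → A) :
    wcat (u ++ v) x = wcat u (wcat v x) := by
  funext n
  simp only [wcat, List.length_append]
  by_cases h1 : n < u.length
  · rw [dif_pos (by omega), dif_pos h1, List.getElem_append_left h1]
  · rw [dif_neg h1]
    by_cases h2 : n < u.length + v.length
    · rw [dif_pos h2, dif_pos (by omega), List.getElem_append_right (by omega)]
    · rw [dif_neg h2, dif_neg (by omega)]
      congr 1
      omega

theorem wcat_right_inj {A : Type*} {u : List A} {x x' : ℕ → A}
    (h : wcat u x = wcat u x') : x = x' := by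
  funext n
  have := congrFun h (u.length + n)
  simp only [wcat] at this
  rwa [dif_neg (by omega), dif_neg (by omega), Nat.add_sub_cancel_left] at this

theorem tauHat_image_Cset {A : Type*} (F : Set (List A)) (α β γ δ' : List A)
    (hα : α ∈ Lang F) (hβ : β ∈ Lang F) (hγ : γ ∈ Lang F) (hδ : β ++ δ' ∈ Lang F)
    (hred : ReducedPair α β) :
    {y : ℕ → A | ∃ x : ℕ → A,
        y = wcat α x ∧ wcat β x ∈ Cset F γ (β ++ δ') ∩ Cset F α β}
      = Cset F γ (α ++ δ') ∩ Cset F β α := by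
  ext y
  constructor
  · rintro ⟨x, rfl, ⟨z, hz, hzX, hγz⟩, ⟨x', hx', hβx', hαx'⟩⟩
    rw [wcat_append'] at hz
    have hx : x = wcat δ' z := wcat_right_inj hz
    subst hx
    have hx'' : x' = wcat δ' z := (wcat_right_inj hx').symm
    subst hx''
    exact ⟨⟨z, by rw [wcat_append'], by rw [wcat_append']; exact hαx', hγz⟩,
      ⟨wcat δ' z, rfl, hαx', hβx'⟩⟩
  · rintro ⟨⟨z, hz, hzX, hγz⟩, ⟨x, hx, hαx, hβx⟩⟩
    rw [wcat_append'] at hz hzX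
    have hxz : x = wcat δ' z := wcat_right_inj (hx.symm.trans hz)
    subst hxz
    exact ⟨wcat δ' z, hx, ⟨z, by rw [wcat_append'], by rw [wcat_append']; exact hβx, hγz⟩,
      ⟨wcat δ' z, rfl, hβx, hαx⟩⟩
end
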